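/- Let G be a finitely generated torsion-free 2-step nilpotent group whose largest ring of scalars is ℤ. Then G cannot be written as an (internal) direct product H × K with both H and K non-abelian. -/

import Mathlib

/-- The commutator `[x,y] = x⁻¹y⁻¹xy`. -/
def grpComm {G : Type*} [Group G] (x y : G) : G := x⁻¹ * y⁻¹ * x * y

section

open scoped commutatorElement

lemma grpComm_mem_commutator {G : Type*} [Group G] (g h : G) :
    grpComm g h ∈ commutator G := by
  have : grpComm g h = ⁅g⁻¹, h⁻¹⁆ := by
    simp [grpComm, commutatorElement_def]
  rw [this, commutator_def]
  exact Subgroup.commutator_mem_commutator (Subgroup.mem_top _) (Subgroup.mem_top _)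

end

/-- Old Mathlib's `Monoid.IsTorsionFree` (removed): no nontrivial element has finite order. -/
def Monoid.IsTorsionFree (G : Type*) [Monoid G] : Prop :=
  ∀ g : G, g ≠ 1 → ¬IsOfFinOrder g

/-- `g` is centralizer-small: `C_G(g) = {gᵗz : t ∈ ℤ, z ∈ Z(G)}`. -/
def CSmall {G : Type*} [Group G] (g : G) : Prop :=
  ∀ x : G, x * g = g * x ↔ ∃ (t : ℤ) (z : G), z ∈ Subgroup.center G ∧ x = g ^ t * z

/-- `(R, σ, τ)` is a ring of scalars of `G`: the commutative unital ring `R`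
acts faithfully by endomorphisms (via `σ` on `G/Z(G)` and via `τ` on `G' `),
and the commutator pairing `G/Z(G) × G/Z(G) → G'` is `R`-bilinear. -/
def IsRingOfScalars (G : Type*) [Group G] (R : Type*) [CommRing R]
    (σ : R → G ⧸ Subgroup.center G → G ⧸ Subgroup.center G)
    (τ : R → commutator G → commutator G) : Prop :=
  (∀ r x y, σ r (x * y) = σ r x * σ r y) ∧
  (∀ r s x, σ (r + s) x = σ r x * σ s x) ∧
  (∀ r s x, σ (r * s) x = σ r (σ s x)) ∧
  (∀ x, σ 1 x = x) ∧
  (∀ r s, (∀ x, σ r x = σ s x) → r = s) ∧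
  (∀ r x y, τ r (x * y) = τ r x * τ r y) ∧
  (∀ r s x, τ (r + s) x = τ r x * τ s x) ∧
  (∀ r s x, τ (r * s) x = τ r (τ s x)) ∧
  (∀ x, τ 1 x = x) ∧
  (∀ r s, (∀ x, τ r x = τ s x) → r = s) ∧
  (∀ (r : R) (g g' h : G),
    σ r (g : G ⧸ Subgroup.center G) = (g' : G ⧸ Subgroup.center G) →
    τ r ⟨grpComm g h, grpComm_mem_commutator g h⟩ =
      ⟨grpComm g' h, grpComm_mem_commutator g' h⟩) ∧
  (∀ (r : R) (g h h' : G),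
    σ r (h : G ⧸ Subgroup.center G) = (h' : G ⧸ Subgroup.center G) →
    τ r ⟨grpComm g h, grpComm_mem_commutator g h⟩ =
      ⟨grpComm g h', grpComm_mem_commutator g h'⟩)

/-!
A decomposition `G = H × K` gives complementary projections `p, q : G →* G`. In a group of
class two, `[g, h]` is bilinear and depends only on the classes of `g, h` in `G/Z(G)`, so
`(a, b) ∈ ℤ × ℤ`, acting as `x ↦ p(x)^a q(x)^b` both on `G/Z(G)` and on `G'`, is a ring of
scalars; it acts faithfully because `H` and `K` are non-abelian and `G` is torsion-free.
But `ℤ × ℤ` has zero divisors, so it does not embed into `ℤ`.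
-/

section TwoStepNilpotent

open scoped commutatorElement

variable {G : Type*} [Group G]

lemma grpComm_eq_one_iff {x y : G} : grpComm x y = 1 ↔ Commute x y := by
  rw [show grpComm x y = (y * x)⁻¹ * (x * y) by simp only [grpComm]; group, inv_mul_eq_one,
    eq_comm]
  rfl

lemma grpComm_inv (x y : G) : (grpComm x y)⁻¹ = grpComm y x := by
  simp only [grpComm]; group

lemma map_grpComm {H : Type*} [Group H] (f : G →* H) (x y : G) :
    f (grpComm x y) = grpComm (f x) (f y) := by
  simp only [grpComm, map_mul, map_inv]

lemma grpComm_eq_one_of_mem_center {z : G} (hz : z ∈ Subgroup.center G) (y : G) :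
    grpComm z y = 1 :=
  grpComm_eq_one_iff.mpr (Subgroup.mem_center_iff.mp hz y).symm

lemma commutator_le_center_of_grpComm_grpComm (h2 : ∀ x y z : G, grpComm x (grpComm y z) = 1) :
    commutator G ≤ Subgroup.center G := by
  rw [commutator_def, Subgroup.commutator_le]
  intro g₁ _ g₂ _
  rw [show ⁅g₁, g₂⁆ = grpComm g₁⁻¹ g₂⁻¹ by simp [grpComm, commutatorElement_def]]
  exact Subgroup.mem_center_iff.mpr fun g => grpComm_eq_one_iff.mp (h2 g _ _)

lemma map_mem_commutator (f : G →* G) {x : G} (hx : x ∈ commutator G) :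
    f x ∈ commutator G := by
  have : (commutator G).map f ≤ commutator G := by
    rw [map_commutator_eq, commutator_def]
    exact Subgroup.commutator_mono le_top le_top
  exact this ⟨x, hx, rfl⟩

variable (hG : commutator G ≤ Subgroup.center G)
include hG

lemma grpComm_mem_center (x y : G) : grpComm x y ∈ Subgroup.center G :=
  hG (grpComm_mem_commutator x y)

lemma grpComm_mul_left (a b y : G) : grpComm (a * b) y = grpComm a y * grpComm b y := by
  calc grpComm (a * b) y = b⁻¹ * grpComm a y * (y⁻¹ * b * y) := by simp only [grpComm]; group
    _ = grpComm a y * grpComm b y := by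
      rw [Subgroup.mem_center_iff.mp (grpComm_mem_center hG a y) b⁻¹]
      simp only [grpComm]; group

lemma grpComm_mul_right (x a b : G) : grpComm x (a * b) = grpComm x a * grpComm x b := by
  rw [← grpComm_inv, grpComm_mul_left hG, mul_inv_rev, grpComm_inv, grpComm_inv]
  exact Subgroup.mem_center_iff.mp (grpComm_mem_center hG x a) _

def grpCommLeftHom (y : G) : G →* G where
  toFun g := grpComm g y
  map_one' := by simp [grpComm]
  map_mul' a b := grpComm_mul_left hG a b y

lemma grpComm_zpow_left (x y : G) (n : ℤ) : grpComm (x ^ n) y = grpComm x y ^ n :=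
  map_zpow (grpCommLeftHom hG y) x n

lemma grpComm_eq_of_mk_eq {g g' : G}
    (h : (g : G ⧸ Subgroup.center G) = g') (y : G) : grpComm g y = grpComm g' y := by
  rw [← mul_inv_cancel_left g g', grpComm_mul_left hG,
    grpComm_eq_one_of_mem_center (QuotientGroup.eq.mp h), mul_one]

lemma isMulCommutative_quotient_center : IsMulCommutative (G ⧸ Subgroup.center G) :=
  Subgroup.Normal.quotient_commutative_iff_commutator_le.mpr hG

lemma isMulCommutative_commutator : IsMulCommutative (commutator G) :=
  ⟨⟨fun a b => Subtype.ext (Subgroup.mem_center_iff.mp (hG a.2) b).symm⟩⟩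

end TwoStepNilpotent

/-- `p` and `q` are the two projections of a decomposition of `G` as an internal direct product. -/
structure IsDirectSplitting {G : Type*} [Group G] (p q : G →* G) : Prop where
  mul_eq : ∀ g, p g * q g = g
  left_apply_right : ∀ g, p (q g) = 1
  right_apply_left : ∀ g, q (p g) = 1
  commute : ∀ g g', Commute (p g) (q g')

namespace IsDirectSplitting

variable {G : Type*} [Group G] {p q : G →* G} (hs : IsDirectSplitting p q)
include hs

lemma symm : IsDirectSplitting q p where
  mul_eq g := ((hs.commute g g).eq.symm).trans (hs.mul_eq g)
  left_apply_right := hs.right_apply_left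
  right_apply_left := hs.left_apply_right
  commute g g' := (hs.commute g' g).symm

lemma left_apply_left (g : G) : p (p g) = p g := by
  conv_rhs => rw [← hs.mul_eq g, map_mul, hs.left_apply_right, mul_one]

lemma map_mem_center {z : G} (hz : z ∈ Subgroup.center G) : p z ∈ Subgroup.center G := by
  refine Subgroup.mem_center_iff.mpr fun g => ?_
  have hp : Commute (p g) (p z) := by
    rw [Commute, SemiconjBy, ← map_mul, ← map_mul, Subgroup.mem_center_iff.mp hz g]
  rw [← hs.mul_eq g]
  exact hp.mul_left (hs.commute z g).symm

lemma quotientMap (N : Subgroup G) [N.Normal] (hp : N ≤ N.comap p) (hq : N ≤ N.comap q) :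
    IsDirectSplitting (QuotientGroup.map N N p hp) (QuotientGroup.map N N q hq) where
  mul_eq x := QuotientGroup.induction_on x fun g => by
    simp only [QuotientGroup.map_mk, ← QuotientGroup.mk_mul, hs.mul_eq]
  left_apply_right x := QuotientGroup.induction_on x fun g => by
    simp only [QuotientGroup.map_mk, hs.left_apply_right, QuotientGroup.mk_one]
  right_apply_left x := QuotientGroup.induction_on x fun g => by
    simp only [QuotientGroup.map_mk, hs.right_apply_left, QuotientGroup.mk_one]
  commute x y := QuotientGroup.induction_on x fun g => QuotientGroup.induction_on y fun g' =>
    (hs.commute g g').map (QuotientGroup.mk' N)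

lemma restrict (S : Subgroup G) (hp : ∀ x ∈ S, p x ∈ S) (hq : ∀ x ∈ S, q x ∈ S) :
    IsDirectSplitting ((p.domRestrict S).codRestrict S fun x => hp x x.2)
      ((q.domRestrict S).codRestrict S fun x => hq x x.2) where
  mul_eq x := Subtype.ext (hs.mul_eq x)
  left_apply_right x := Subtype.ext (hs.left_apply_right x)
  right_apply_left x := Subtype.ext (hs.right_apply_left x)
  commute x y := Subtype.ext (hs.commute x y)

end IsDirectSplitting

lemma exists_isDirectSplitting {G : Type*} [Group G] {H K : Subgroup G} (hH : H.Normal)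
    (hK : K.Normal) (hHK : H ⊓ K = ⊥) (hHK' : H ⊔ K = ⊤) : ∃ p q : G →* G,
      IsDirectSplitting p q ∧ (∀ h ∈ H, p h = h) ∧ ∀ k ∈ K, q k = k := by
  have comm : ∀ (h : H) (k : K), Commute (H.subtype h) (K.subtype k) := fun h k =>
    Subgroup.commute_of_normal_of_disjoint H K hH hK (disjoint_iff.mpr hHK) _ _ h.2 k.2
  let φ := H.subtype.noncommCoprod K.subtype comm
  have hinj : Function.Injective φ := (MonoidHom.noncommCoprod_injective _ _ comm).mpr
    ⟨H.subtype_injective, K.subtype_injective, by simpa [disjoint_iff] using hHK⟩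
  have hsurj : Function.Surjective φ := MonoidHom.range_eq_top.mp <| by
    rw [MonoidHom.noncommCoprod_range, Subgroup.range_subtype, Subgroup.range_subtype, hHK']
  let e := MulEquiv.ofBijective φ ⟨hinj, hsurj⟩
  have e_apply (x : H × K) : e x = x.1 * x.2 := rfl
  have e_symm_left (h : H) : e.symm h = (h, 1) := by
    rw [e.symm_apply_eq, e_apply]; simp
  have e_symm_right (k : K) : e.symm k = (1, k) := by
    rw [e.symm_apply_eq, e_apply]; simp
  refine ⟨H.subtype.comp ((MonoidHom.fst H K).comp e.symm.toMonoidHom),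
    K.subtype.comp ((MonoidHom.snd H K).comp e.symm.toMonoidHom), ⟨?_, ?_, ?_, ?_⟩, ?_, ?_⟩
  · intro g
    simpa [e_apply] using e.apply_symm_apply g
  · intro g; simp [e_symm_right]
  · intro g; simp [e_symm_left]
  · intro g g'; exact comm _ _
  · intro h hh; simpa using congrArg (fun x : H × K => (x.1 : G)) (e_symm_left ⟨h, hh⟩)
  · intro k hk; simpa using congrArg (fun x : H × K => (x.2 : G)) (e_symm_right ⟨k, hk⟩)

structure IsFaithfulAction (R A : Type*) [CommRing R] [Group A] (σ : R → A → A) : Prop where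
  map_mul : ∀ r x y, σ r (x * y) = σ r x * σ r y
  add_apply : ∀ r s x, σ (r + s) x = σ r x * σ s x
  mul_apply : ∀ r s x, σ (r * s) x = σ r (σ s x)
  one_apply : ∀ x, σ 1 x = x
  injective : ∀ r s, (∀ x, σ r x = σ s x) → r = s

lemma IsFaithfulAction.map_inv {R A : Type*} [CommRing R] [Group A] {σ : R → A → A}
    (hσ : IsFaithfulAction R A σ) (r : R) (x : A) : σ r x⁻¹ = (σ r x)⁻¹ :=
  _root_.map_inv (MonoidHom.mk' (σ r) (hσ.map_mul r)) x

section PairScalar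

open scoped IsMulCommutative

variable {A : Type*} [Group A] [IsMulCommutative A]

def pairScalar (P Q : A →* A) (r : ℤ × ℤ) (x : A) : A := P x ^ r.1 * Q x ^ r.2

lemma isFaithfulAction_pairScalar {P Q : A →* A} (hs : IsDirectSplitting P Q) {x y : A}
    (hx : P x = x) (hy : Q y = y) (hxo : ∀ n : ℤ, x ^ n = 1 → n = 0)
    (hyo : ∀ n : ℤ, y ^ n = 1 → n = 0) :
    IsFaithfulAction (ℤ × ℤ) A (pairScalar P Q) where
  map_mul r a b := by
    simp only [pairScalar, map_mul, mul_zpow]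
    exact mul_mul_mul_comm _ _ _ _
  add_apply r s a := by
    simp only [pairScalar, Prod.fst_add, Prod.snd_add, zpow_add]
    exact mul_mul_mul_comm _ _ _ _
  mul_apply r s a := by
    simp only [pairScalar, Prod.fst_mul, Prod.snd_mul, map_mul, map_zpow, hs.left_apply_left,
      hs.symm.left_apply_left, hs.left_apply_right, hs.right_apply_left, one_zpow, mul_one,
      one_mul, ← zpow_mul, mul_comm r.1, mul_comm r.2]
  one_apply a := by
    simp only [pairScalar, Prod.fst_one, Prod.snd_one, zpow_one, hs.mul_eq]
  injective r s h := by
    have hQx : Q x = 1 := by rw [← hx, hs.right_apply_left]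
    have hPy : P y = 1 := by rw [← hy, hs.left_apply_right]
    have h₁ := h x
    have h₂ := h y
    simp only [pairScalar, hx, hQx, hy, hPy, one_zpow, mul_one, one_mul] at h₁ h₂
    ext
    · simpa [sub_eq_zero] using hxo (r.1 - s.1) (by rw [zpow_sub, h₁, mul_inv_cancel])
    · simpa [sub_eq_zero] using hyo (r.2 - s.2) (by rw [zpow_sub, h₂, mul_inv_cancel])

end PairScalar

lemma Monoid.IsTorsionFree.zpow_ne_one {G : Type*} [Group G] (htf : Monoid.IsTorsionFree G)
    {g : G} (hg : g ≠ 1) {n : ℤ} (hn : n ≠ 0) : g ^ n ≠ 1 :=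
  fun h => htf g hg (isOfFinOrder_iff_zpow_eq_one.mpr ⟨n, hn, h⟩)

section TorsionFree

variable {G : Type*} [Group G] (htf : Monoid.IsTorsionFree G) {x y : G} (hxy : ¬Commute x y)
include htf hxy

lemma eq_zero_of_grpComm_zpow_eq_one {n : ℤ} (h : grpComm x y ^ n = 1) : n = 0 := by
  by_contra hn
  exact htf.zpow_ne_one (mt grpComm_eq_one_iff.mp hxy) hn h

lemma eq_zero_of_mk_zpow_eq_one (hG : commutator G ≤ Subgroup.center G) {n : ℤ}
    (h : (x : G ⧸ Subgroup.center G) ^ n = 1) : n = 0 := by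
  rw [← QuotientGroup.mk_zpow, QuotientGroup.eq_one_iff] at h
  refine eq_zero_of_grpComm_zpow_eq_one htf hxy ?_
  rw [← grpComm_zpow_left hG, grpComm_eq_one_of_mem_center h]

end TorsionFree

namespace IsDirectSplitting

variable {G : Type*} [Group G] (hG : commutator G ≤ Subgroup.center G) {p q : G →* G}
  (hs : IsDirectSplitting p q)
include hG hs

lemma grpComm_apply_left (g y : G) : grpComm (p g) y = p (grpComm g y) := by
  conv_lhs => rw [← hs.mul_eq y]
  rw [grpComm_mul_right hG, grpComm_eq_one_iff.mpr (hs.commute g y), mul_one, map_grpComm]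

lemma grpComm_eq_of_mk_eq_zpow_mul (r : ℤ × ℤ) {g g' : G}
    (h : ((p g ^ r.1 * q g ^ r.2 : G) : G ⧸ Subgroup.center G) = g') (y : G) :
    grpComm g' y = p (grpComm g y) ^ r.1 * q (grpComm g y) ^ r.2 := by
  rw [← grpComm_eq_of_mk_eq hG h, grpComm_mul_left hG, grpComm_zpow_left hG,
    grpComm_zpow_left hG, hs.grpComm_apply_left hG, hs.symm.grpComm_apply_left hG]

end IsDirectSplitting

lemma IsDirectSplitting.isRingOfScalars {G : Type*} [Group G] (htf : Monoid.IsTorsionFree G)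
    (hG : commutator G ≤ Subgroup.center G) {p q : G →* G} (hs : IsDirectSplitting p q)
    (hp : ∃ x y, ¬Commute (p x) (p y)) (hq : ∃ x y, ¬Commute (q x) (q y)) :
    ∃ σ τ, IsRingOfScalars G (ℤ × ℤ) σ τ := by
  obtain ⟨x₁, y₁, h₁⟩ := hp
  obtain ⟨x₂, y₂, h₂⟩ := hq
  have := isMulCommutative_quotient_center hG
  have := isMulCommutative_commutator hG
  have hpZ : Subgroup.center G ≤ (Subgroup.center G).comap p := fun _ => hs.map_mem_center
  have hqZ : Subgroup.center G ≤ (Subgroup.center G).comap q := fun _ => hs.symm.map_mem_center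
  have hpG' : ∀ c ∈ commutator G, p c ∈ commutator G := fun _ => map_mem_commutator p
  have hqG' : ∀ c ∈ commutator G, q c ∈ commutator G := fun _ => map_mem_commutator q
  set σ := pairScalar (QuotientGroup.map _ _ p hpZ) (QuotientGroup.map _ _ q hqZ)
  set τ := pairScalar (A := commutator G)
    ((p.domRestrict (commutator G)).codRestrict (commutator G) fun c => hpG' c c.2)
    ((q.domRestrict (commutator G)).codRestrict (commutator G) fun c => hqG' c c.2)
  have hσ : IsFaithfulAction _ _ σ :=
    isFaithfulAction_pairScalar (hs.quotientMap _ hpZ hqZ) (x := (p x₁ : G ⧸ Subgroup.center G))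
      (y := (q x₂ : G ⧸ Subgroup.center G)) (congrArg _ (hs.left_apply_left x₁))
      (congrArg _ (hs.symm.left_apply_left x₂)) (fun _ => eq_zero_of_mk_zpow_eq_one htf h₁ hG)
      (fun _ => eq_zero_of_mk_zpow_eq_one htf h₂ hG)
  have hτ : IsFaithfulAction _ _ τ :=
    isFaithfulAction_pairScalar (hs.restrict _ hpG' hqG')
      (x := ⟨_, grpComm_mem_commutator (p x₁) (p y₁)⟩)
      (y := ⟨_, grpComm_mem_commutator (q x₂) (q y₂)⟩)
      (Subtype.ext (by
        change p (grpComm _ _) = _; rw [map_grpComm, hs.left_apply_left, hs.left_apply_left]))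
      (Subtype.ext (by
        change q (grpComm _ _) = _
        rw [map_grpComm, hs.symm.left_apply_left, hs.symm.left_apply_left]))
      (fun _ h => eq_zero_of_grpComm_zpow_eq_one htf h₁ (congrArg Subtype.val h))
      (fun _ h => eq_zero_of_grpComm_zpow_eq_one htf h₂ (congrArg Subtype.val h))
  have compat : ∀ r (g g' h : G), σ r g = g' →
      τ r ⟨_, grpComm_mem_commutator g h⟩ = ⟨_, grpComm_mem_commutator g' h⟩ :=
    fun r g g' h hg => Subtype.ext (hs.grpComm_eq_of_mk_eq_zpow_mul hG r hg h).symm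
  refine ⟨σ, τ, hσ.1, hσ.2, hσ.3, hσ.4, hσ.5, hτ.1, hτ.2, hτ.3, hτ.4, hτ.5, compat,
    fun r g h h' hh => ?_⟩
  have swap (a b : G) : (⟨_, grpComm_mem_commutator a b⟩ : commutator G) =
      (⟨_, grpComm_mem_commutator b a⟩)⁻¹ := Subtype.ext (grpComm_inv b a).symm
  rw [swap, hτ.map_inv, compat r h h' g hh, swap, inv_inv]

theorem stmt_9_general (G : Type*) [Group G]
    (htf : Monoid.IsTorsionFree G)
    (h2 : ∀ x y z : G, grpComm x (grpComm y z) = 1)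
    (hmax : ∀ (R : Type) (_ : CommRing R)
      (σ : R → G ⧸ Subgroup.center G → G ⧸ Subgroup.center G)
      (τ : R → commutator G → commutator G),
      IsRingOfScalars G R σ τ → ∃ f : R →+* ℤ, Function.Injective f) :
    ¬ ∃ H K : Subgroup G, H.Normal ∧ K.Normal ∧ H ⊓ K = ⊥ ∧ H ⊔ K = ⊤ ∧
      (¬ ∀ x ∈ H, ∀ y ∈ H, x * y = y * x) ∧
      (¬ ∀ x ∈ K, ∀ y ∈ K, x * y = y * x) := by
  rintro ⟨H, K, hH, hK, hHK, hHK', hH_nonabelian, hK_nonabelian⟩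
  obtain ⟨p, q, hs, hpH, hqK⟩ := exists_isDirectSplitting hH hK hHK hHK'
  push Not at hH_nonabelian hK_nonabelian
  obtain ⟨x₁, hx₁, y₁, hy₁, h₁⟩ := hH_nonabelian
  obtain ⟨x₂, hx₂, y₂, hy₂, h₂⟩ := hK_nonabelian
  obtain ⟨σ, τ, hστ⟩ := hs.isRingOfScalars htf (commutator_le_center_of_grpComm_grpComm h2)
    ⟨x₁, y₁, by rwa [hpH x₁ hx₁, hpH y₁ hy₁]⟩
    ⟨x₂, y₂, by rwa [hqK x₂ hx₂, hqK y₂ hy₂]⟩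
  obtain ⟨f, hf⟩ := hmax (ℤ × ℤ) inferInstance σ τ hστ
  have := hf.isDomain f
  exact false_of_nontrivial_of_product_domain ℤ ℤ

/-- If the largest ring of scalars of a f.g. torsion-free 2-step nilpotent
group `G` is `ℤ` (i.e. every ring of scalars of `G` embeds into `ℤ`), then `G`
is not an internal direct product of two non-abelian subgroups. -/
theorem stmt_9 (G : Type*) [Group G] [Group.FG G]
    (htf : Monoid.IsTorsionFree G)
    (h2 : ∀ x y z : G, grpComm x (grpComm y z) = 1)
    (hmax : ∀ (R : Type) (_ : CommRing R)
      (σ : R → G ⧸ Subgroup.center G → G ⧸ Subgroup.center G)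
      (τ : R → commutator G → commutator G),
      IsRingOfScalars G R σ τ → ∃ f : R →+* ℤ, Function.Injective f) :
    ¬ ∃ H K : Subgroup G, H.Normal ∧ K.Normal ∧ H ⊓ K = ⊥ ∧ H ⊔ K = ⊤ ∧
      (¬ ∀ x ∈ H, ∀ y ∈ H, x * y = y * x) ∧
      (¬ ∀ x ∈ K, ∀ y ∈ K, x * y = y * x) :=
  stmt_9_general G htf h2 hmax
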